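/- Let G ⊆ ℂ^n be an n-circled domain of holomorphy, F := E(log G), and let f ∈ H^{∞,1}(G). If ν = (ν_1,…,ν_n) ∈ ℤ^n satisfies ν_j ≠ 0 for some j and a_ν(f) ≠ 0, then the standard basis vector e_j belongs to F^⊥. -/

import Mathlib

open MeasureTheory Filter Topology Set
open scoped ENNReal

noncomputable section

/-- Complex partial derivative in direction `j`. -/
def pd (n : ℕ) (j : Fin n) (f : (Fin n → ℂ) → ℂ) : (Fin n → ℂ) → ℂ :=
  fun z => fderiv ℂ f z (Pi.single j 1)

/-- Mixed partial derivative `∂^ν`. -/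
def pdM (n : ℕ) (ν : Fin n → ℕ) (f : (Fin n → ℂ) → ℂ) : (Fin n → ℂ) → ℂ :=
  (List.finRange n).foldr (fun j g => (pd n j)^[ν j] g) f

/-- A domain: a nonempty open connected set. -/
def IsDomainSet {n : ℕ} (G : Set (Fin n → ℂ)) : Prop :=
  IsOpen G ∧ IsConnected G

/-- `G` is `n`-circled. -/
def IsCircled {n : ℕ} (G : Set (Fin n → ℂ)) : Prop :=
  ∀ z ∈ G, ∀ θ : Fin n → ℝ, (fun j => Complex.exp ((θ j : ℂ) * Complex.I) * z j) ∈ G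

/-- `G` is an `F`-domain of holomorphy. -/
def IsDomainOfHolomorphyFor {n : ℕ} (G : Set (Fin n → ℂ))
    (F : Set ((Fin n → ℂ) → ℂ)) : Prop :=
  ¬ ∃ G₀ Gt : Set (Fin n → ℂ), IsDomainSet G₀ ∧ IsDomainSet Gt ∧ G₀.Nonempty ∧
      G₀ ⊆ G ∩ Gt ∧ ¬ Gt ⊆ G ∧
      ∀ f ∈ F, ∃ ft : (Fin n → ℂ) → ℂ, DifferentiableOn ℂ ft Gt ∧ EqOn ft f G₀

/-- `G` is a domain of holomorphy. -/
def IsDomainOfHolomorphy {n : ℕ} (G : Set (Fin n → ℂ)) : Prop :=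
  IsDomainOfHolomorphyFor G {f | DifferentiableOn ℂ f G}

/-- `G` is fat. -/
def IsFat {n : ℕ} (G : Set (Fin n → ℂ)) : Prop :=
  G = interior (closure G)

/-- `log G`. -/
def logSet {n : ℕ} (G : Set (Fin n → ℂ)) : Set (Fin n → ℝ) :=
  {x | (fun j => (Real.exp (x j) : ℂ)) ∈ G}

/-- The largest vector subspace `F` with `X + F = X` (for a convex domain `X`). -/
def ESpace {n : ℕ} (X : Set (Fin n → ℝ)) : Set (Fin n → ℝ) :=
  {v | ∀ x ∈ X, ∀ t : ℝ, x + t • v ∈ X}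

/-- A subspace (given as a set) is of rational type: it is spanned by its integer points. -/
def IsRationalType {n : ℕ} (F : Set (Fin n → ℝ)) : Prop :=
  (Submodule.span ℝ (F ∩ {x | ∀ j, ∃ m : ℤ, x j = (m : ℝ)}) : Set (Fin n → ℝ)) = F

/-- Bounded holomorphic functions on `G`. -/
def Hinf {n : ℕ} (G : Set (Fin n → ℂ)) : Set ((Fin n → ℂ) → ℂ) :=
  {f | DifferentiableOn ℂ f G ∧ ∃ C : ℝ, ∀ z ∈ G, ‖f z‖ ≤ C}

/-- `L_h^{p,k}(G)`. -/
def LhPK {n : ℕ} (G : Set (Fin n → ℂ)) (p : ℝ≥0∞) (k : ℕ) :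
    Set ((Fin n → ℂ) → ℂ) :=
  {f | DifferentiableOn ℂ f G ∧ ∀ ν : Fin n → ℕ, (∑ j, ν j) ≤ k →
      MemLp (pdM n ν f) p (volume.restrict G)}

/-- `L_h^{⋄,k}(G) = ⋂_{p ∈ [1,∞]} L_h^{p,k}(G)`. -/
def LhDiaK {n : ℕ} (G : Set (Fin n → ℂ)) (k : ℕ) : Set ((Fin n → ℂ) → ℂ) :=
  {f | ∀ p : ℝ≥0∞, 1 ≤ p → f ∈ LhPK G p k}

/-- `A^k(G)`. -/
def Ak {n : ℕ} (G : Set (Fin n → ℂ)) (k : ℕ) : Set ((Fin n → ℂ) → ℂ) :=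
  {f | DifferentiableOn ℂ f G ∧ ∀ ν : Fin n → ℕ, (∑ j, ν j) ≤ k →
      ∃ g : (Fin n → ℂ) → ℂ, ContinuousOn g (closure G) ∧ EqOn g (pdM n ν f) G}

/-- `A^∞(G)`. -/
def Ainf {n : ℕ} (G : Set (Fin n → ℂ)) : Set ((Fin n → ℂ) → ℂ) :=
  {f | DifferentiableOn ℂ f G ∧ ∀ ν : Fin n → ℕ,
      ∃ g : (Fin n → ℂ) → ℂ, ContinuousOn g (closure G) ∧ EqOn g (pdM n ν f) G}

/-- `H^{∞,k}(G)`. -/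
def HinfK {n : ℕ} (G : Set (Fin n → ℂ)) (k : ℕ) : Set ((Fin n → ℂ) → ℂ) :=
  {f | DifferentiableOn ℂ f G ∧ ∀ ν : Fin n → ℕ, (∑ j, ν j) ≤ k →
      ∃ C : ℝ, ∀ z ∈ G, ‖pdM n ν f z‖ ≤ C}

/-- The class `S(G)`. -/
def Sclass {n : ℕ} (G : Set (Fin n → ℂ)) : Set ((Fin n → ℂ) → ℂ) :=
  {f | DifferentiableOn ℂ f G ∧ ∀ K : Set (Fin n → ℂ), IsCompact K → K ⊆ closure G →
      ∀ ν : Fin n → ℕ, ∃ C : ℝ, ∀ z ∈ K ∩ G, ‖pdM n ν f z‖ ≤ C}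

/-- `O(cl G)`: functions on `G` extending holomorphically to a neighbourhood of `cl G`. -/
def Ocl {n : ℕ} (G : Set (Fin n → ℂ)) : Set ((Fin n → ℂ) → ℂ) :=
  {f | ∃ U : Set (Fin n → ℂ), IsOpen U ∧ closure G ⊆ U ∧
      ∃ g : (Fin n → ℂ) → ℂ, DifferentiableOn ℂ g U ∧ EqOn f g G}

/-- `V_ε`. -/
def Veps {n : ℕ} (ε : Fin n → Bool) : Set (Fin n → ℂ) :=
  {z | ∀ j, (ε j = true → z j = 0) ∧ (ε j = false → z j ≠ 0)}

/-- `G_ε`. -/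
def Geps {n : ℕ} (G : Set (Fin n → ℂ)) (ε : Fin n → Bool) : Set (Fin n → ℂ) :=
  {w | ∃ lam z : Fin n → ℂ, (∀ j, ‖lam j‖ ≤ 1) ∧ z ∈ G ∧
      w = fun j => (if ε j then lam j else 1) * z j}

/-- The `n`-circled set `{|z^α| < c}`. -/
def monomialLt {n : ℕ} (α : Fin n → ℤ) (c : ℝ) : Set (Fin n → ℂ) :=
  {z | ∏ j ∈ Finset.univ.filter (fun j => 0 < α j), ‖z j‖ ^ (α j).toNat
     < c * ∏ j ∈ Finset.univ.filter (fun j => α j < 0), ‖z j‖ ^ (-(α j)).toNat}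

/-- `f` has Laurent expansion on `G` with coefficients `a`. -/
def HasLaurent {n : ℕ} (G : Set (Fin n → ℂ)) (f : (Fin n → ℂ) → ℂ)
    (a : (Fin n → ℤ) → ℂ) : Prop :=
  ∀ z ∈ G, HasSum (fun ν : Fin n → ℤ => a ν * ∏ j, z j ^ ν j) (f z)

/-!
Integrating `f(z) z^{-ν}` over the polytorus `|z_k| = exp x_k` (`x ∈ log G`) gives the Cauchy
estimate `‖a_ν‖ exp ⟨ν, x⟩ ≤ sup ‖f‖`. Differentiating the same integral in `x_j` gives the
estimate for `z_j ∂f/∂z_j`, whose `ν`-th coefficient is `ν_j a_ν`: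
`|ν_j| ‖a_ν‖ exp ⟨ν, x⟩ ≤ exp x_j · sup ‖∂f/∂z_j‖`.
If `v ∈ E(log G)`, the whole line `x + ℝ v` lies in `log G`; along it the first estimate
forces `⟨ν, v⟩ = 0` and the second `⟨ν, v⟩ = v_j`, so `v_j = 0` as soon as `a_ν ≠ 0`.
-/

open scoped Real

def circleChar (m : ℤ) (t : ℝ) : ℂ := Complex.exp (m * t * Complex.I)

lemma norm_circleChar (m : ℤ) (t : ℝ) : ‖circleChar m t‖ = 1 := by
  rw [circleChar, Complex.norm_exp]
  simp

lemma circleChar_add (m m' : ℤ) (t : ℝ) :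
    circleChar (m + m') t = circleChar m t * circleChar m' t := by
  rw [circleChar, circleChar, circleChar, ← Complex.exp_add]
  push_cast
  ring_nf

lemma continuous_circleChar (m : ℤ) : Continuous (circleChar m) := by
  unfold circleChar
  fun_prop

lemma integral_circleChar (m : ℤ) :
    ∫ t in Icc 0 (2 * π), circleChar m t = if m = 0 then (2 * π : ℂ) else 0 := by
  rw [integral_Icc_eq_integral_Ioc, ← intervalIntegral.integral_of_le Real.two_pi_pos.le]
  split_ifs with hm
  · simp [circleChar, hm]
  · have hmI : (m : ℂ) * Complex.I ≠ 0 := mul_ne_zero (Int.cast_ne_zero.mpr hm) Complex.I_ne_zero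
    simp_rw [circleChar, mul_right_comm _ _ Complex.I]
    rw [integral_exp_mul_complex hmI]
    have hperiod : (m : ℂ) * Complex.I * ((2 * π : ℝ) : ℂ) = m * (2 * π * Complex.I) := by
      push_cast
      ring
    rw [hperiod, Complex.exp_int_mul_two_pi_mul_I]
    simp

section Torus

variable {n : ℕ}

def torusChar (ν : Fin n → ℤ) (θ : Fin n → ℝ) : ℂ := ∏ k, circleChar (ν k) (θ k)

lemma norm_torusChar (ν : Fin n → ℤ) (θ : Fin n → ℝ) : ‖torusChar ν θ‖ = 1 := by
  simp [torusChar, norm_circleChar]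

lemma torusChar_add (μ ν : Fin n → ℤ) (θ : Fin n → ℝ) :
    torusChar (μ + ν) θ = torusChar μ θ * torusChar ν θ := by
  simp only [torusChar, Pi.add_apply, circleChar_add, Finset.prod_mul_distrib]

lemma continuous_torusChar (ν : Fin n → ℤ) : Continuous (torusChar ν) :=
  continuous_finsetProd _ fun k _ => (continuous_circleChar (ν k)).comp (continuous_apply k)

variable (n) in
def torusBox : Set (Fin n → ℝ) := univ.pi fun _ => Icc 0 (2 * π)

lemma isCompact_torusBox : IsCompact (torusBox n) :=
  isCompact_univ_pi fun _ => isCompact_Icc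

lemma volume_real_torusBox : volume.real (torusBox n) = (2 * π) ^ n := by
  rw [torusBox, pi_univ_Icc, measureReal_def,
    Real.volume_Icc_pi_toReal fun _ => Real.two_pi_pos.le]
  simp

instance : IsFiniteMeasure (volume.restrict (torusBox n)) :=
  isFiniteMeasure_restrict.mpr isCompact_torusBox.measure_lt_top.ne

lemma integral_torusBox_prod (h : Fin n → ℝ → ℂ) :
    ∫ θ in torusBox n, ∏ k, h k (θ k) = ∏ k, ∫ t in Icc 0 (2 * π), h k t := by
  rw [torusBox, volume_pi, Measure.restrict_pi_pi, integral_fintype_prod_eq_prod]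

lemma integral_torusChar (ν : Fin n → ℤ) :
    ∫ θ in torusBox n, torusChar ν θ = if ν = 0 then (2 * π : ℂ) ^ n else 0 := by
  simp only [torusChar, integral_torusBox_prod, integral_circleChar, Finset.prod_ite_zero,
    Finset.prod_const, Finset.card_univ, Fintype.card_fin, funext_iff, Pi.zero_apply,
    Finset.mem_univ, forall_const]

lemma norm_setIntegral_torusBox_le {g : (Fin n → ℝ) → ℂ} {C : ℝ} (hg : ∀ θ, ‖g θ‖ ≤ C) :
    ‖∫ θ in torusBox n, g θ‖ ≤ C * (2 * π) ^ n := by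
  simpa [volume_real_torusBox, mul_comm] using
    norm_integral_le_of_norm_le_const (μ := volume.restrict (torusBox n)) (ae_of_all _ hg)

def torusPoint (x θ : Fin n → ℝ) : Fin n → ℂ :=
  fun k => Real.exp (x k) * Complex.exp (θ k * Complex.I)

lemma norm_torusPoint_apply (x θ : Fin n → ℝ) (k : Fin n) :
    ‖torusPoint x θ k‖ = Real.exp (x k) := by
  simp [torusPoint, Complex.norm_exp]

lemma continuous_torusPoint (x : Fin n → ℝ) : Continuous (torusPoint x) := by
  unfold torusPoint
  fun_prop

lemma prod_torusPoint_zpow (x θ : Fin n → ℝ) (μ : Fin n → ℤ) :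
    ∏ k, torusPoint x θ k ^ μ k = Real.exp (∑ k, μ k * x k) * torusChar μ θ := by
  simp only [torusPoint, mul_zpow, Finset.prod_mul_distrib, torusChar, circleChar,
    Complex.ofReal_exp, ← Complex.exp_int_mul, ← Complex.exp_sum, mul_assoc]
  push_cast
  rfl

lemma norm_prod_torusPoint_zpow (x θ : Fin n → ℝ) (μ : Fin n → ℤ) :
    ‖∏ k, torusPoint x θ k ^ μ k‖ = Real.exp (∑ k, μ k * x k) := by
  rw [prod_torusPoint_zpow, norm_mul, norm_torusChar, Complex.norm_real, Real.norm_eq_abs,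
    Real.abs_exp, mul_one]

lemma IsCircled.torusPoint_mem {G : Set (Fin n → ℂ)} (hG : IsCircled G) {x : Fin n → ℝ}
    (hx : x ∈ logSet G) (θ : Fin n → ℝ) : torusPoint x θ ∈ G := by
  convert hG _ hx θ using 1
  exact funext fun k => mul_comm _ _

end Torus

lemma norm_two_pi_pow (n : ℕ) : ‖(2 * π : ℂ) ^ n‖ = (2 * π) ^ n := by
  rw [norm_pow, norm_mul, Complex.norm_two, Complex.norm_real, Real.norm_eq_abs,
    abs_of_pos Real.pi_pos]

section Laurent

variable {n : ℕ} {G : Set (Fin n → ℂ)} {f : (Fin n → ℂ) → ℂ} {a : (Fin n → ℤ) → ℂ}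

lemma norm_coeff_mul_exp_summable (ha : HasLaurent G f a) {x : Fin n → ℝ} (hx : x ∈ logSet G) :
    Summable fun μ : Fin n → ℤ => ‖a μ‖ * Real.exp (∑ k, μ k * x k) := by
  have hx' : torusPoint x 0 ∈ G := by
    rwa [show torusPoint x 0 = fun k => (Real.exp (x k) : ℂ) from funext fun k => by
      simp [torusPoint]]
  refine (summable_norm_iff.mpr (ha _ hx').summable).congr fun μ => ?_
  rw [norm_mul, norm_prod_torusPoint_zpow]

lemma HasLaurent.integral_torusChar_neg (hG : IsCircled G) (ha : HasLaurent G f a)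
    {x : Fin n → ℝ} (hx : x ∈ logSet G) (ν : Fin n → ℤ) :
    ∫ θ in torusBox n, f (torusPoint x θ) * torusChar (-ν) θ =
      a ν * Real.exp (∑ k, ν k * x k) * (2 * π) ^ n := by
  set term : (Fin n → ℤ) → (Fin n → ℝ) → ℂ :=
    fun μ θ => a μ * Real.exp (∑ k, μ k * x k) * torusChar (μ - ν) θ
  have hterm : ∀ θ, HasSum (fun μ => term μ θ) (f (torusPoint x θ) * torusChar (-ν) θ) := by
    intro θ
    refine ((ha _ (hG.torusPoint_mem hx θ)).mul_right (torusChar (-ν) θ)).congr_fun fun μ => ?_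
    simp only [term, prod_torusPoint_zpow, sub_eq_add_neg, torusChar_add]
    ring
  have hint : ∀ μ, Integrable (term μ) (volume.restrict (torusBox n)) := fun μ =>
    (continuous_const.mul (continuous_torusChar _)).continuousOn.integrableOn_compact
      isCompact_torusBox
  have hnorm : ∀ μ θ, ‖term μ θ‖ = ‖a μ‖ * Real.exp (∑ k, μ k * x k) := by
    intro μ θ
    rw [norm_mul, norm_torusChar, mul_one, norm_mul, Complex.norm_real, Real.norm_eq_abs,
      Real.abs_exp]
  have hsummable : Summable fun μ => ∫ θ in torusBox n, ‖term μ θ‖ := by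
    simp only [hnorm, integral_const, smul_eq_mul]
    exact (norm_coeff_mul_exp_summable ha hx).mul_left _
  have hcoeff : ∀ μ, ∫ θ in torusBox n, term μ θ =
      if μ = ν then a ν * Real.exp (∑ k, ν k * x k) * (2 * π) ^ n else 0 := by
    intro μ
    rw [integral_const_mul, integral_torusChar]
    rcases eq_or_ne μ ν with rfl | h
    · simp
    · simp [h, sub_eq_zero]
  have hsum := hasSum_integral_of_summable_integral_norm hint hsummable
  simp only [hcoeff, fun θ => (hterm θ).tsum_eq] at hsum
  exact hsum.unique (hasSum_ite_eq ν _)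

lemma norm_coeff_mul_exp_le (hG : IsCircled G) (ha : HasLaurent G f a) {C : ℝ}
    (hC : ∀ z ∈ G, ‖f z‖ ≤ C) (ν : Fin n → ℤ) {x : Fin n → ℝ} (hx : x ∈ logSet G) :
    ‖a ν‖ * Real.exp (∑ k, ν k * x k) ≤ C := by
  have hbound : ‖∫ θ in torusBox n, f (torusPoint x θ) * torusChar (-ν) θ‖ ≤ C * (2 * π) ^ n :=
    norm_setIntegral_torusBox_le fun θ => by
      rw [norm_mul, norm_torusChar, mul_one]
      exact hC _ (hG.torusPoint_mem hx θ)
  rw [ha.integral_torusChar_neg hG hx, norm_mul, norm_mul, norm_two_pi_pow, Complex.norm_real,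
    Real.norm_eq_abs, Real.abs_exp] at hbound
  exact le_of_mul_le_mul_right hbound (pow_pos Real.two_pi_pos n)

end Laurent

section Derivative

variable {n : ℕ} {G : Set (Fin n → ℂ)} {f : (Fin n → ℂ) → ℂ}

lemma eventually_add_single_mem_logSet (hGo : IsOpen G) {x : Fin n → ℝ} (hx : x ∈ logSet G)
    (j : Fin n) : ∀ᶠ t in 𝓝 (0 : ℝ), x + Pi.single j t ∈ logSet G := by
  have hlog : IsOpen (logSet G) := hGo.preimage (by fun_prop)
  have hpath : Continuous fun t : ℝ => x + Pi.single j t :=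
    continuous_const.add (continuous_single (A := fun _ => ℝ) j)
  exact (hlog.preimage hpath).mem_nhds (by simpa using hx)

lemma hasDerivAt_comp_of_hasDerivAt_single {γ : ℝ → Fin n → ℂ} {j : Fin n} {c : ℂ} {t : ℝ}
    (hf : DifferentiableAt ℂ f (γ t)) (hγ : HasDerivAt γ (Pi.single j c) t) :
    HasDerivAt (fun s => f (γ s)) (c * pd n j f (γ t)) t := by
  refine ((hf.hasFDerivAt.restrictScalars ℝ).comp_hasDerivAt t hγ).congr_deriv ?_
  rw [ContinuousLinearMap.coe_restrictScalars', ← smul_eq_mul, pd, ← map_smul, ← Pi.single_smul,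
    smul_eq_mul, mul_one]

lemma hasDerivAt_torusPoint_add_single (x θ : Fin n → ℝ) (j : Fin n) (t : ℝ) :
    HasDerivAt (fun s => torusPoint (x + Pi.single j s) θ)
      (Pi.single j (torusPoint (x + Pi.single j t) θ j)) t := by
  rw [hasDerivAt_pi]
  intro k
  rcases eq_or_ne k j with rfl | hk
  · simp only [torusPoint, Pi.add_apply, Pi.single_eq_same]
    simpa using (((hasDerivAt_id t).const_add (x k)).exp.ofReal_comp.mul_const
      (Complex.exp (θ k * Complex.I)))
  · simp only [torusPoint, Pi.add_apply, Pi.single_eq_of_ne hk, add_zero]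
    exact hasDerivAt_const _ _

lemma hasDerivAt_integral_torusPoint_add_single (hGo : IsOpen G) (hG : IsCircled G)
    (hf : DifferentiableOn ℂ f G) {j : Fin n} {C : ℝ} (hC : ∀ z ∈ G, ‖pd n j f z‖ ≤ C)
    {x : Fin n → ℝ} (hx : x ∈ logSet G) (ν : Fin n → ℤ) :
    HasDerivAt (fun t => ∫ θ in torusBox n, f (torusPoint (x + Pi.single j t) θ) * torusChar ν θ)
      (∫ θ in torusBox n, torusPoint x θ j * pd n j f (torusPoint x θ) * torusChar ν θ) 0 := by
  set path : ℝ → Fin n → ℝ := fun t => x + Pi.single j t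
  set s : Set ℝ := Ioo (-1) 1 ∩ path ⁻¹' logSet G
  have hs : s ∈ 𝓝 0 := inter_mem (Ioo_mem_nhds (by norm_num) one_pos)
    (eventually_add_single_mem_logSet hGo hx j)
  have hmem : ∀ t ∈ s, ∀ θ, torusPoint (path t) θ ∈ G := fun t ht => hG.torusPoint_mem ht.2
  have hcont : ∀ t ∈ s, Continuous fun θ => f (torusPoint (path t) θ) * torusChar ν θ :=
    fun t ht => (hf.continuousOn.comp_continuous (continuous_torusPoint _) (hmem t ht)).mul
      (continuous_torusChar ν)
  have hpd : Measurable (pd n j f) := measurable_fderiv_apply_const ℂ f _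
  have hderiv : ∀ θ, ∀ t ∈ s, HasDerivAt (fun t => f (torusPoint (path t) θ) * torusChar ν θ)
      (torusPoint (path t) θ j * pd n j f (torusPoint (path t) θ) * torusChar ν θ) t :=
    fun θ t ht => (hasDerivAt_comp_of_hasDerivAt_single
      (hf.differentiableAt (hGo.mem_nhds (hmem t ht θ)))
      (hasDerivAt_torusPoint_add_single x θ j t)).mul_const _
  have hbound : ∀ θ, ∀ t ∈ s,
      ‖torusPoint (path t) θ j * pd n j f (torusPoint (path t) θ) * torusChar ν θ‖ ≤
        Real.exp (x j + 1) * C := by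
    intro θ t ht
    rw [norm_mul, norm_mul, norm_torusChar, norm_torusPoint_apply, mul_one]
    have ht1 : path t j ≤ x j + 1 := by simpa [path] using ht.1.2.le
    exact mul_le_mul (Real.exp_le_exp.mpr ht1) (hC _ (hmem t ht θ)) (norm_nonneg _)
      (Real.exp_pos _).le
  have hpath0 : path 0 = x := by simp [path]
  have key := hasDerivAt_integral_of_dominated_loc_of_deriv_le hs
    (eventually_of_mem hs fun t ht => (hcont t ht).aestronglyMeasurable)
    ((hcont 0 (mem_of_mem_nhds hs)).continuousOn.integrableOn_compact isCompact_torusBox)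
    ((((continuous_apply j).comp (continuous_torusPoint _)).measurable.mul
      (hpd.comp (continuous_torusPoint _).measurable)).mul
        (continuous_torusChar ν).measurable).aestronglyMeasurable
    (ae_of_all _ hbound) (integrable_const (μ := volume.restrict (torusBox n)) _)
    (ae_of_all _ hderiv)
  rw [hpath0] at key
  exact key.2

lemma abs_mul_norm_coeff_mul_exp_le {a : (Fin n → ℤ) → ℂ} (hGo : IsOpen G) (hG : IsCircled G)
    (hf : DifferentiableOn ℂ f G) (ha : HasLaurent G f a) {j : Fin n} {C : ℝ}
    (hC : ∀ z ∈ G, ‖pd n j f z‖ ≤ C) (ν : Fin n → ℤ) {x : Fin n → ℝ} (hx : x ∈ logSet G) :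
    |(ν j : ℝ)| * ‖a ν‖ * Real.exp (∑ k, ν k * x k) ≤ Real.exp (x j) * C := by
  set S := ∑ k, (ν k : ℝ) * x k
  have hline : ∀ t : ℝ, ∑ k, (ν k : ℝ) * (x + Pi.single j t : Fin n → ℝ) k = S + ν j * t := by
    intro t
    simp [S, mul_add, Finset.sum_add_distrib, Pi.single_apply]
  have hcoeff : (fun t : ℝ => ∫ θ in torusBox n,
      f (torusPoint (x + Pi.single j t) θ) * torusChar (-ν) θ) =ᶠ[𝓝 0]
        fun t => a ν * Real.exp (S + ν j * t) * (2 * π) ^ n := by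
    filter_upwards [eventually_add_single_mem_logSet hGo hx j] with t ht
    rw [ha.integral_torusChar_neg hG ht, hline]
  have hexplicit : HasDerivAt (fun t : ℝ => a ν * Real.exp (S + ν j * t) * (2 * π) ^ n)
      (a ν * ((Real.exp S * ν j : ℝ) : ℂ) * (2 * π) ^ n) 0 := by
    have hlin : HasDerivAt (fun t : ℝ => S + ν j * t) (ν j) 0 := by
      simpa using ((hasDerivAt_id (0 : ℝ)).const_mul (ν j : ℝ)).const_add S
    simpa using (hlin.exp.ofReal_comp.const_mul (a ν)).mul_const ((2 * π : ℂ) ^ n)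
  have hderiv := (hasDerivAt_integral_torusPoint_add_single hGo hG hf hC hx (-ν)).unique
    (hexplicit.congr_of_eventuallyEq hcoeff)
  have hbound := norm_setIntegral_torusBox_le (n := n) (C := Real.exp (x j) * C)
    (g := fun θ => torusPoint x θ j * pd n j f (torusPoint x θ) * torusChar (-ν) θ) fun θ => by
      rw [norm_mul, norm_mul, norm_torusChar, norm_torusPoint_apply, mul_one]
      exact mul_le_mul_of_nonneg_left (hC _ (hG.torusPoint_mem hx θ)) (Real.exp_pos _).le
  rw [hderiv, norm_mul, norm_mul, norm_two_pi_pow, Complex.norm_real, Real.norm_eq_abs,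
    abs_mul, Real.abs_exp] at hbound
  refine le_of_mul_le_mul_right ?_ (pow_pos Real.two_pi_pos n)
  linarith

end Derivative

lemma pdM_zero {n : ℕ} (f : (Fin n → ℂ) → ℂ) : pdM n 0 f = f := by
  simp [pdM]

lemma pdM_single {n : ℕ} (j : Fin n) (f : (Fin n → ℂ) → ℂ) :
    pdM n (Pi.single j 1) f = pd n j f := by
  have key : ∀ l : List (Fin n), l.Nodup →
      l.foldr (fun i g => (pd n i)^[(Pi.single j 1 : Fin n → ℕ) i] g) f =
        if j ∈ l then pd n j f else f := by
    intro l hl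
    induction l with
    | nil => simp
    | cons i l ih =>
      rw [List.foldr_cons, ih (List.nodup_cons.mp hl).2]
      rcases eq_or_ne i j with rfl | hij
      · simp [(List.nodup_cons.mp hl).1]
      · simp [Ne.symm hij]
  rw [pdM, key _ (List.nodup_finRange n), if_pos (List.mem_finRange j)]

lemma IsCircled.logSet_nonempty {n : ℕ} {G : Set (Fin n → ℂ)} (hG : IsCircled G)
    (hGo : IsOpen G) (hne : G.Nonempty) : (logSet G).Nonempty := by
  obtain ⟨z, hzG, hz⟩ :=
    (dense_pi univ fun _ _ => dense_compl_singleton (0 : ℂ)).inter_open_nonempty G hGo hne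
  refine ⟨fun k => Real.log ‖z k‖, ?_⟩
  show (fun k => ((Real.exp (Real.log ‖z k‖) : ℝ) : ℂ)) ∈ G
  convert hG z hzG (fun k => -Complex.arg (z k)) using 1
  funext k
  rw [Real.exp_log (norm_pos_iff.mpr (hz k trivial))]
  conv_rhs => rw [← Complex.norm_mul_exp_arg_mul_I (z k)]
  rw [mul_left_comm, ← Complex.exp_add]
  simp

lemma eq_of_forall_mul_exp_le_mul_exp {A B s r : ℝ} (hA : 0 < A)
    (h : ∀ t, A * Real.exp (t * s) ≤ B * Real.exp (t * r)) : s = r := by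
  by_contra hsr
  have hB : 0 < B := by simpa using hA.trans_le (by simpa using h 0)
  set t := (Real.log (B / A) + 1) / (s - r)
  have hts : t * s = t * r + (Real.log (B / A) + 1) := by
    have : t * (s - r) = Real.log (B / A) + 1 := div_mul_cancel₀ _ (sub_ne_zero.mpr hsr)
    linarith [mul_sub t s r]
  have ht := h t
  rw [hts, Real.exp_add, Real.exp_add, Real.exp_log (div_pos hB hA)] at ht
  have hAB : A * (B / A) = B := mul_div_cancel₀ B hA.ne'
  have he : B * Real.exp (t * r) * 1 < B * Real.exp (t * r) * Real.exp 1 :=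
    mul_lt_mul_of_pos_left (Real.one_lt_exp_iff.mpr one_pos) (mul_pos hB (Real.exp_pos _))
  have hrw : A * (Real.exp (t * r) * (B / A * Real.exp 1)) =
      A * (B / A) * Real.exp (t * r) * Real.exp 1 := by ring
  rw [hrw, hAB] at ht
  linarith

theorem stmt16_general {n : ℕ} (G : Set (Fin n → ℂ)) (hdom : IsDomainSet G) (hcirc : IsCircled G)
    (f : (Fin n → ℂ) → ℂ) (hf : f ∈ HinfK G 1)
    (a : (Fin n → ℤ) → ℂ) (ha : HasLaurent G f a) :
    ∀ ν : Fin n → ℤ, ∀ j : Fin n, ν j ≠ 0 → a ν ≠ 0 →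
      ∀ v ∈ ESpace (logSet G), v j = 0 := by
  intro ν j hνj haν v hv
  obtain ⟨hfG, hbounded⟩ := hf
  obtain ⟨C, hC⟩ := hbounded 0 (by simp)
  obtain ⟨C', hC'⟩ := hbounded (Pi.single j 1) (by simp)
  rw [pdM_zero] at hC
  rw [pdM_single] at hC'
  obtain ⟨x, hx⟩ := hcirc.logSet_nonempty hdom.1 hdom.2.nonempty
  set S := ∑ k, (ν k : ℝ) * x k
  set s := ∑ k, (ν k : ℝ) * v k
  have hline : ∀ t : ℝ, ∑ k, (ν k : ℝ) * (x + t • v) k = S + t * s := fun t => by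
    simp only [Pi.add_apply, Pi.smul_apply, smul_eq_mul, mul_add, Finset.sum_add_distrib,
      Finset.mul_sum, S, s, mul_left_comm t]
  have hs : s = 0 := by
    refine eq_of_forall_mul_exp_le_mul_exp (A := ‖a ν‖ * Real.exp S) (B := C) (by positivity)
      fun t => ?_
    have := norm_coeff_mul_exp_le hcirc ha hC ν (hv x hx t)
    rw [hline, Real.exp_add] at this
    simpa [mul_assoc] using this
  have hsj : s = v j := by
    refine eq_of_forall_mul_exp_le_mul_exp (A := |(ν j : ℝ)| * ‖a ν‖ * Real.exp S)
      (B := Real.exp (x j) * C') (by positivity) fun t => ?_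
    have := abs_mul_norm_coeff_mul_exp_le hdom.1 hcirc hfG ha hC' ν (hv x hx t)
    rw [hline, Pi.add_apply, Pi.smul_apply, smul_eq_mul, Real.exp_add, Real.exp_add] at this
    linear_combination this
  linarith

/-- For `f ∈ H^{∞,1}(G)`: if `ν_j ≠ 0` and `a_ν(f) ≠ 0` then `e_j ∈ E(log G)^⊥`. -/
theorem stmt16 {n : ℕ} (G : Set (Fin n → ℂ)) (hdom : IsDomainSet G) (hcirc : IsCircled G)
    (hDoH : IsDomainOfHolomorphy G) (f : (Fin n → ℂ) → ℂ) (hf : f ∈ HinfK G 1)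
    (a : (Fin n → ℤ) → ℂ) (ha : HasLaurent G f a) :
    ∀ ν : Fin n → ℤ, ∀ j : Fin n, ν j ≠ 0 → a ν ≠ 0 →
      ∀ v ∈ ESpace (logSet G), v j = 0 :=
  stmt16_general G hdom hcirc f hf a ha
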